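/- Let A = (a_{ij})_{1≤i,j≤n} be an n × n real array with n ≥ 2, let π be a permutation of {1,…,n} chosen uniformly at random, and let Y = Σ_{i=1}^n a_{iπ(i)}. Then Var(Y) = (1/(n−1)) Σ_{1≤i,j≤n} (a_{ij}² − a_{i·}² − a_{·j}² + a_{··}²) = (1/(n−1)) Σ_{1≤i,j≤n} (a_{ij} − a_{i·} − a_{·j} + a_{··})². -/

import Mathlib

/-!
Passing to the doubly centred array `d_{ij} = a_{ij} - a_{i·} - a_{·j} + a_{··}` shifts `Y` by the
constant `n a_{··}`, and `d` has vanishing row and column sums, so `Var Y = E[(∑ i, d_{iπ(i)})²]`.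
As `π i` is uniform on `{1, …, n}` and, for `i ≠ k`, `(π i, π k)` is uniform on pairs of distinct
values, the diagonal terms contribute `∑ d² / n`; by the vanishing row and then column sums the
cross terms contribute `∑ d² / (n (n - 1))`, for a total of `∑ d² / (n - 1)`. Finally
`∑ d² = ∑ (a_{ij}² - a_{i·}² - a_{·j}² + a_{··}²)` since `d` is orthogonal to every array of the
form `x_i + y_j`, and `∑ i, (a_{i·} - a_{··}) = 0`.
-/

open MeasureTheory ProbabilityTheory

noncomputable instance (n : ℕ) : MeasurableSpace (Equiv.Perm (Fin n)) := ⊤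

/-- The uniform distribution on the permutations of `{1, …, n}`. -/
noncomputable def uniformPerm (n : ℕ) : Measure (Equiv.Perm (Fin n)) :=
  (PMF.uniformOfFintype (Equiv.Perm (Fin n))).toMeasure

/-- Row mean `a_{i·}`. -/
noncomputable def rowMean (n : ℕ) (a : Fin n → Fin n → ℝ) (i : Fin n) : ℝ :=
  (1 / (n : ℝ)) * ∑ j, a i j

/-- Column mean `a_{·j}`. -/
noncomputable def colMean (n : ℕ) (a : Fin n → Fin n → ℝ) (j : Fin n) : ℝ :=
  (1 / (n : ℝ)) * ∑ i, a i j

/-- Grand mean `a_{··}`. -/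
noncomputable def grandMean (n : ℕ) (a : Fin n → Fin n → ℝ) : ℝ :=
  (1 / (n : ℝ) ^ 2) * ∑ i, ∑ j, a i j

open Finset
open scoped Nat

namespace Equiv.Perm

variable {α : Type*} [Fintype α] [DecidableEq α]

lemma card_filter_apply_eq_mul_left (σ : Perm α) (i j : α) :
    #{π : Perm α | π i = σ j} = #{π : Perm α | π i = j} :=
  (card_equiv (Equiv.mulLeft σ) fun π => by simp).symm

lemma card_filter_apply₂_eq_mul_left (σ : Perm α) (i k j l : α) :
    #{π : Perm α | π i = σ j ∧ π k = σ l} = #{π : Perm α | π i = j ∧ π k = l} :=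
  (card_equiv (Equiv.mulLeft σ) fun π => by simp).symm

lemma card_filter_apply_eq (i j : α) : #{π : Perm α | π i = j} = (Fintype.card α - 1)! := by
  have hcount : ∀ j' ∈ univ, #{π : Perm α | π i = j'} = #{π : Perm α | π i = j} :=
    fun j' _ => by simpa using card_filter_apply_eq_mul_left (swap j j') i j
  have htotal : Fintype.card α * #{π : Perm α | π i = j} = (Fintype.card α)! := by
    calc Fintype.card α * #{π : Perm α | π i = j}
        = ∑ j' : α, #{π : Perm α | π i = j'} := by simp [sum_congr rfl hcount]
      _ = (Fintype.card α)! := by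
        rw [← Fintype.card_perm, ← card_univ, card_eq_sum_card_fiberwise (s := univ)
          (f := fun π : Perm α => π i) (t := univ) fun _ _ => mem_univ _]
  have hpos : 0 < Fintype.card α := Fintype.card_pos_iff.mpr ⟨i⟩
  rw [← Nat.mul_factorial_pred hpos.ne'] at htotal
  exact Nat.eq_of_mul_eq_mul_left hpos htotal

lemma card_filter_apply₂_eq {i k j l : α} (hik : i ≠ k) (hjl : j ≠ l) :
    #{π : Perm α | π i = j ∧ π k = l} = (Fintype.card α - 2)! := by
  have hcount : ∀ l' ∈ univ.erase j,
      #{π : Perm α | π i = j ∧ π k = l'} = #{π : Perm α | π i = j ∧ π k = l} :=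
    fun l' hl' => by
      simpa [swap_apply_of_ne_of_ne hjl (ne_of_mem_erase hl').symm] using
        card_filter_apply₂_eq_mul_left (swap l l') i k j l
  have htotal : (Fintype.card α - 1) * #{π : Perm α | π i = j ∧ π k = l}
      = (Fintype.card α - 1)! := by
    calc (Fintype.card α - 1) * #{π : Perm α | π i = j ∧ π k = l}
        = ∑ l' ∈ univ.erase j, #{π : Perm α | π i = j ∧ π k = l'} := by
          simp [sum_congr rfl hcount, card_erase_of_mem]
      _ = (Fintype.card α - 1)! := by
        rw [← card_filter_apply_eq i j,
          card_eq_sum_card_fiberwise (s := {π : Perm α | π i = j})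
            (f := fun π : Perm α => π k) (t := univ.erase j) fun π hπ => ?_]
        · exact sum_congr rfl fun l' _ => by rw [filter_filter]
        · simp only [coe_filter, mem_univ, true_and, Set.mem_ofPred_eq] at hπ
          simpa [← hπ] using hik.symm
  have hpos : 0 < Fintype.card α - 1 := by
    have := Fintype.one_lt_card_iff.mpr ⟨i, k, hik⟩
    omega
  rw [← Nat.mul_factorial_pred hpos.ne',
    show Fintype.card α - 1 - 1 = Fintype.card α - 2 by omega] at htotal
  exact Nat.eq_of_mul_eq_mul_left hpos htotal

variable {M : Type*} [AddCommMonoid M]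

lemma sum_comp_apply (i : α) (g : α → M) :
    ∑ π : Perm α, g (π i) = (Fintype.card α - 1)! • ∑ j, g j := by
  rw [← sum_fiberwise' univ (fun π : Perm α => π i) g, smul_sum]
  simp [card_filter_apply_eq]

lemma sum_comp_apply₂ {i k : α} (hik : i ≠ k) (g : α → α → M) :
    ∑ π : Perm α, g (π i) (π k)
      = (Fintype.card α - 2)! • ∑ j, ∑ l ∈ univ.erase j, g j l := by
  rw [← sum_fiberwise univ (fun π : Perm α => π i), smul_sum]
  refine sum_congr rfl fun j _ => ?_
  rw [← sum_fiberwise_of_maps_to (s := {π : Perm α | π i = j}) (g := fun π => π k)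
    (t := univ.erase j) fun π hπ => ?_, smul_sum]
  · refine sum_congr rfl fun l hl => ?_
    have hfibre : ∀ π ∈ ({π : Perm α | π i = j ∧ π k = l} : Finset _),
        g (π i) (π k) = g j l := fun π hπ => by
      rw [(mem_filter.mp hπ).2.1, (mem_filter.mp hπ).2.2]
    rw [filter_filter, sum_congr rfl hfibre, sum_const,
      card_filter_apply₂_eq hik (ne_of_mem_erase hl).symm]
  · simp only [mem_filter, mem_univ, true_and] at hπ
    simpa [← hπ] using hik.symm

lemma sum_sq_sum_apply_of_sum_eq_zero {R : Type*} [CommRing R] {d : α → α → R}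
    (hrow : ∀ i, ∑ j, d i j = 0) (hcol : ∀ j, ∑ i, d i j = 0) :
    ∑ π : Perm α, (∑ i, d i (π i)) ^ 2
      = ((Fintype.card α - 1)! + (Fintype.card α - 2)! : ℕ) * ∑ i, ∑ j, d i j ^ 2 := by
  have hdiag : ∀ i, ∑ π : Perm α, d i (π i) * d i (π i)
      = (Fintype.card α - 1)! • ∑ j, d i j ^ 2 := fun i => by
    simp only [sum_comp_apply i fun j => d i j * d i j, sq]
  have hoff : ∀ i, ∀ k ∈ univ.erase i, ∑ π : Perm α, d i (π i) * d k (π k)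
      = -((Fintype.card α - 2)! • ∑ j, d i j * d k j) := fun i k hk => by
    rw [sum_comp_apply₂ (ne_of_mem_erase hk).symm fun j l => d i j * d k l, ← smul_neg,
      ← sum_neg_distrib]
    simp_rw [← mul_sum, sum_erase_eq_sub (mem_univ _), hrow, zero_sub, mul_neg]
  have hcross : ∀ i, ∑ k ∈ univ.erase i, ∑ j, d i j * d k j = -∑ j, d i j ^ 2 :=
    fun i => by
      rw [sum_comm, ← sum_neg_distrib]
      simp_rw [← mul_sum, sum_erase_eq_sub (mem_univ _), hcol, zero_sub, mul_neg, sq]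
  calc ∑ π : Perm α, (∑ i, d i (π i)) ^ 2
      = ∑ i, ∑ k, ∑ π : Perm α, d i (π i) * d k (π k) := by
        simp_rw [sq, sum_mul_sum]
        rw [sum_comm]
        exact sum_congr rfl fun i _ => sum_comm
    _ = ∑ i, ((Fintype.card α - 1)! + (Fintype.card α - 2)!) • ∑ j, d i j ^ 2 := by
        refine sum_congr rfl fun i _ => ?_
        rw [← add_sum_erase _ _ (mem_univ i), hdiag, sum_congr rfl (hoff i), sum_neg_distrib,
          ← smul_sum, hcross, smul_neg, neg_neg, add_smul]
    _ = _ := by rw [← smul_sum, nsmul_eq_mul]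

end Equiv.Perm

noncomputable def doublyCentered (n : ℕ) (a : Fin n → Fin n → ℝ) (i j : Fin n) : ℝ :=
  a i j - rowMean n a i - colMean n a j + grandMean n a

section Means

variable {n : ℕ} {a : Fin n → Fin n → ℝ}

lemma sum_row_eq_mul_rowMean (hn : n ≠ 0) (i : Fin n) : ∑ j, a i j = n * rowMean n a i := by
  simp [rowMean, hn]

lemma sum_col_eq_mul_colMean (hn : n ≠ 0) (j : Fin n) : ∑ i, a i j = n * colMean n a j := by
  simp [colMean, hn]

lemma sum_rowMean (hn : n ≠ 0) : ∑ i, rowMean n a i = n * grandMean n a := by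
  simp only [rowMean, grandMean, ← mul_sum]
  field_simp

lemma sum_colMean (hn : n ≠ 0) : ∑ j, colMean n a j = n * grandMean n a := by
  simp only [colMean, grandMean, ← mul_sum]
  rw [sum_comm]
  field_simp

lemma sum_doublyCentered_row (hn : n ≠ 0) (i : Fin n) : ∑ j, doublyCentered n a i j = 0 := by
  simp only [doublyCentered, sum_add_distrib, sum_sub_distrib, sum_row_eq_mul_rowMean hn,
    sum_colMean hn, sum_const, card_univ, Fintype.card_fin, nsmul_eq_mul]
  ring

lemma sum_doublyCentered_col (hn : n ≠ 0) (j : Fin n) : ∑ i, doublyCentered n a i j = 0 := by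
  simp only [doublyCentered, sum_add_distrib, sum_sub_distrib, sum_const, card_univ,
    Fintype.card_fin, nsmul_eq_mul]
  rw [sum_col_eq_mul_colMean hn, sum_rowMean hn]
  ring

lemma sum_doublyCentered_apply (hn : n ≠ 0) (π : Equiv.Perm (Fin n)) :
    ∑ i, doublyCentered n a i (π i) = ∑ i, a i (π i) - n * grandMean n a := by
  simp only [doublyCentered, sum_add_distrib, sum_sub_distrib, Equiv.sum_comp π (colMean n a),
    sum_rowMean hn, sum_colMean hn, sum_const, card_univ, Fintype.card_fin, nsmul_eq_mul]
  ring

lemma sum_sq_doublyCentered (hn : n ≠ 0) :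
    ∑ i, ∑ j, doublyCentered n a i j ^ 2
      = ∑ i, ∑ j, (a i j ^ 2 - rowMean n a i ^ 2 - colMean n a j ^ 2 + grandMean n a ^ 2) := by
  have horth : ∑ i, ∑ j,
      (rowMean n a i + colMean n a j - grandMean n a) * doublyCentered n a i j = 0 := by
    simp only [add_mul, sub_mul, sum_add_distrib, sum_sub_distrib, ← mul_sum,
      sum_doublyCentered_row hn, mul_zero, sum_const_zero, sub_zero]
    rw [sum_comm]
    simp only [← mul_sum, sum_doublyCentered_col hn, mul_zero, sum_const_zero, add_zero]
  have hmeans : ∑ i, ∑ j, (rowMean n a i - grandMean n a) * (colMean n a j - grandMean n a)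
      = 0 := by
    rw [← sum_mul_sum]
    simp [sum_sub_distrib, sum_rowMean hn]
  calc ∑ i, ∑ j, doublyCentered n a i j ^ 2
      = ∑ i, ∑ j, (a i j ^ 2 - rowMean n a i ^ 2 - colMean n a j ^ 2 + grandMean n a ^ 2)
          - 2 * ∑ i, ∑ j,
              (rowMean n a i + colMean n a j - grandMean n a) * doublyCentered n a i j
          - 2 * ∑ i, ∑ j,
              (rowMean n a i - grandMean n a) * (colMean n a j - grandMean n a) := by
        simp only [mul_sum, ← sum_sub_distrib]
        refine sum_congr rfl fun i _ => sum_congr rfl fun j _ => ?_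
        simp only [doublyCentered]
        ring
    _ = _ := by rw [horth, hmeans]; ring

end Means

instance (n : ℕ) : IsProbabilityMeasure (uniformPerm n) := by
  rw [uniformPerm]
  infer_instance

lemma integral_uniformPerm {n : ℕ} (f : Equiv.Perm (Fin n) → ℝ) :
    ∫ π, f π ∂uniformPerm n = (n ! : ℝ)⁻¹ * ∑ π, f π := by
  simp [uniformPerm, PMF.integral_eq_sum, PMF.uniformOfFintype_apply, mul_sum,
    Fintype.card_perm]

lemma inv_factorial_mul_factorial_sub_one_add_factorial_sub_two {n : ℕ} (hn : 2 ≤ n) :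
    (n ! : ℝ)⁻¹ * ((n - 1)! + (n - 2)! : ℕ) = 1 / ((n : ℝ) - 1) := by
  obtain ⟨m, rfl⟩ := Nat.exists_eq_add_of_le' hn
  simp only [Nat.add_sub_cancel, show m + 2 - 1 = m + 1 by omega, Nat.factorial_succ]
  push_cast
  rw [show (m : ℝ) + 2 - 1 = m + 1 by ring]
  field_simp

theorem hoeffding_variance (n : ℕ) (hn : 2 ≤ n) (a : Fin n → Fin n → ℝ) :
    variance (fun p : Equiv.Perm (Fin n) => ∑ i, a i (p i)) (uniformPerm n) =
        (1 / ((n : ℝ) - 1)) * ∑ i, ∑ j,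
          ((a i j) ^ 2 - (rowMean n a i) ^ 2 - (colMean n a j) ^ 2 +
            (grandMean n a) ^ 2) ∧
      variance (fun p : Equiv.Perm (Fin n) => ∑ i, a i (p i)) (uniformPerm n) =
        (1 / ((n : ℝ) - 1)) * ∑ i, ∑ j,
          (a i j - rowMean n a i - colMean n a j + grandMean n a) ^ 2 := by
  have hn0 : n ≠ 0 := by omega
  have hshift : (fun π : Equiv.Perm (Fin n) => ∑ i, a i (π i))
      = fun π => ∑ i, doublyCentered n a i (π i) + n * grandMean n a := by
    ext π
    rw [sum_doublyCentered_apply hn0]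
    ring
  have hmean : ∫ π, ∑ i, doublyCentered n a i (π i) ∂uniformPerm n = 0 := by
    rw [integral_uniformPerm, sum_comm]
    simp [Equiv.Perm.sum_comp_apply, sum_doublyCentered_row hn0]
  have hvar : variance (fun π : Equiv.Perm (Fin n) => ∑ i, a i (π i)) (uniformPerm n)
      = 1 / ((n : ℝ) - 1) * ∑ i, ∑ j, doublyCentered n a i j ^ 2 := by
    rw [hshift, variance_add_const .of_discrete, variance_of_integral_eq_zero .of_discrete hmean,
      integral_uniformPerm, Equiv.Perm.sum_sq_sum_apply_of_sum_eq_zero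
        (sum_doublyCentered_row hn0) (sum_doublyCentered_col hn0),
      Fintype.card_fin, ← mul_assoc, inv_factorial_mul_factorial_sub_one_add_factorial_sub_two hn]
  exact ⟨hvar.trans (by rw [sum_sq_doublyCentered hn0]), hvar⟩
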